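/- arXiv:2210.17197 — 4 statements merged into one kernel-verified Lean document; each statement's English description precedes it below -/
import Mathlib

section
/- Let V be a 2m-dimensional Euclidean vector space with orthogonal complex structure J, and let B ∈ V be fixed. Define the endomorphism A of V by 2A(Y) = ⟨JX,Y⟩B - ⟨B,Y⟩JX + ⟨X,Y⟩JB - ⟨JB,Y⟩X for a fixed X ∈ V. Then the 2-vector (J∘A)^∧ determined by 2⟨(J∘A)^∧, Y∧Z⟩ = ⟨J(A(Y)), Z⟩ equals ½(B∧X - JB∧JX). -/
open scoped RealInnerProductSpace

/-- Pointwise form of `(J∇_X J)^∧ = ½(B∧X - JB∧JX)`: if `2A(Y) = ⟨JX,Y⟩B - ⟨B,Y⟩JX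
+ ⟨X,Y⟩JB - ⟨JB,Y⟩X` and `p` is the 2-vector of `J∘A`, then `p = ½(B∧X - JB∧JX)`.
`Λ²V` is modelled by `W` with wedge map `w` and inner product `Bf`. -/
theorem stmt_9 {V W : Type*} [NormedAddCommGroup V] [InnerProductSpace ℝ V]
    [FiniteDimensional ℝ V] [AddCommGroup W] [Module ℝ W]
    (J : V →ₗ[ℝ] V)
    (hJ2 : J ∘ₗ J = -LinearMap.id)
    (hJorth : ∀ x y : V, ⟪J x, J y⟫ = ⟪x, y⟫)
    (w : V →ₗ[ℝ] V →ₗ[ℝ] W)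
    (halt : ∀ v : V, w v v = 0)
    (hspan : Submodule.span ℝ {x : W | ∃ u v : V, w u v = x} = ⊤)
    (Bf : W →ₗ[ℝ] W →ₗ[ℝ] ℝ)
    (hBnondeg : ∀ x : W, (∀ y : W, Bf x y = 0) → x = 0)
    (hBf : ∀ v₁ v₂ v₃ v₄ : V,
      Bf (w v₁ v₂) (w v₃ v₄) =
        (1/2 : ℝ) * (⟪v₁, v₃⟫ * ⟪v₂, v₄⟫ - ⟪v₁, v₄⟫ * ⟪v₂, v₃⟫))
    (b X : V) (A : V → V)
    (hA : ∀ Y : V, (2 : ℝ) • A Y =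
      ⟪J X, Y⟫ • b - ⟪b, Y⟫ • J X + ⟪X, Y⟫ • J b - ⟪J b, Y⟫ • X)
    (p : W)
    (hp : ∀ Y Z : V, 2 * Bf p (w Y Z) = ⟪J (A Y), Z⟫) :
    p = (1/2 : ℝ) • (w b X - w (J b) (J X)) := by
  have hJJ : ∀ v : V, J (J v) = -v := by
    intro v
    have := congrArg (fun f => f v) hJ2
    simpa using this
  set q : W := (1/2 : ℝ) • (w b X - w (J b) (J X)) with hq
  have key : ∀ y : W, Bf (p - q) y = 0 := by
    intro y
    have hy : y ∈ Submodule.span ℝ {x : W | ∃ u v : V, w u v = x} := by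
      rw [hspan]; trivial
    induction hy using Submodule.span_induction with
    | mem x hx =>
      obtain ⟨u, v, rfl⟩ := hx
      have h1 := hp u v
      have h3 := congrArg (fun t => ⟪J t, v⟫) (hA u)
      simp only [map_smul, map_add, map_sub, inner_add_left, inner_sub_left,
        inner_smul_left, RCLike.star_def, conj_trivial, hJJ, inner_neg_left] at h3
      have hq1 : Bf q (w u v) = (1/2 : ℝ) * (Bf (w b X) (w u v) - Bf (w (J b) (J X)) (w u v)) := by
        rw [hq]; simp [map_smul, map_sub]
      rw [map_sub, LinearMap.sub_apply, hq1, hBf, hBf]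
      have hbX := hBf b X u v
      nlinarith [h1, h3, hbX]
    | zero => simp
    | add x y hx hy ihx ihy => rw [map_add, ihx, ihy, add_zero]
    | smul c x hx ih => rw [map_smul, ih, smul_zero]
  have : p - q = 0 := hBnondeg _ key
  have := sub_eq_zero.mp this
  rw [this]
end

section
/- Let V be a Euclidean vector space, R an algebraic curvature tensor, Φ a bilinear form with associated endomorphism Φ̂, and define R^D(X,Y)Z = R(X,Y)Z + ½{Φ(X,Y)Z - Φ(Y,X)Z + Φ(X,Z)Y - Φ(Y,Z)X + ⟨X,Z⟩Φ̂Y - ⟨Y,Z⟩Φ̂X}. Writing dφ(X,Y) := Φ(X,Y) - Φ(Y,X), one has 2⟨R^D(X,Y)Z,T⟩ - 2⟨R^D(Z,T)X,Y⟩ = dφ(X,Y)⟨Z,T⟩ - dφ(Z,T)⟨X,Y⟩ + dφ(X,Z)⟨Y,T⟩ + dφ(Y,T)⟨X,Z⟩ - dφ(Y,Z)⟨X,T⟩ - dφ(X,T)⟨Y,Z⟩ for all X,Y,Z,T ∈ V. -/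
open scoped RealInnerProductSpace

/-- Identity (6) of the paper: the failure of the pair symmetry of `R^D` is expressed
through `dφ(X,Y) := Φ(X,Y) - Φ(Y,X)`. -/
theorem stmt_12 {V : Type*} [NormedAddCommGroup V] [InnerProductSpace ℝ V]
    [FiniteDimensional ℝ V]
    (R : V →ₗ[ℝ] V →ₗ[ℝ] V →ₗ[ℝ] V)
    (hskew1 : ∀ X Y Z T : V, ⟪R X Y Z, T⟫ = -⟪R Y X Z, T⟫)
    (hskew2 : ∀ X Y Z T : V, ⟪R X Y Z, T⟫ = -⟪R X Y T, Z⟫)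
    (hpair : ∀ X Y Z T : V, ⟪R X Y Z, T⟫ = ⟪R Z T X, Y⟫)
    (Φ : V →ₗ[ℝ] V →ₗ[ℝ] ℝ) (Φhat : V →ₗ[ℝ] V)
    (hΦhat : ∀ X Y : V, ⟪Φhat X, Y⟫ = Φ X Y) :
    ∀ X Y Z T : V,
      2 * ⟪R X Y Z + (1/2 : ℝ) • (Φ X Y • Z - Φ Y X • Z + Φ X Z • Y - Φ Y Z • X
          + ⟪X, Z⟫ • Φhat Y - ⟪Y, Z⟫ • Φhat X), T⟫ -
      2 * ⟪R Z T X + (1/2 : ℝ) • (Φ Z T • X - Φ T Z • X + Φ Z X • T - Φ T X • Z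
          + ⟪Z, X⟫ • Φhat T - ⟪T, X⟫ • Φhat Z), Y⟫ =
      (Φ X Y - Φ Y X) * ⟪Z, T⟫ - (Φ Z T - Φ T Z) * ⟪X, Y⟫
      + (Φ X Z - Φ Z X) * ⟪Y, T⟫ + (Φ Y T - Φ T Y) * ⟪X, Z⟫
      - (Φ Y Z - Φ Z Y) * ⟪X, T⟫ - (Φ X T - Φ T X) * ⟪Y, Z⟫ := by
  intro X Y Z T
  have h := hpair X Y Z T
  simp only [inner_add_left, inner_smul_left, inner_sub_left, RCLike.conj_to_real, hΦhat]
  rw [h, real_inner_comm T X, real_inner_comm Z X, real_inner_comm T Y, real_inner_comm Z Y]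
  ring
end

section
/- Let V be an n-dimensional Euclidean vector space, R an algebraic curvature tensor, Φ a bilinear form with associated endomorphism Φ̂, and R^D defined as R^D(X,Y)Z = R(X,Y)Z + ½{Φ(X,Y)Z - Φ(Y,X)Z + Φ(X,Z)Y - Φ(Y,Z)X + ⟨X,Z⟩Φ̂Y - ⟨Y,Z⟩Φ̂X}. Define ρ_D(X,Z) = Σ_i ⟨R^D(X,e_i)Z,e_i⟩ and ρ(X,Z) = Σ_i ⟨R(X,e_i)Z,e_i⟩ for an orthonormal basis (e_i). Then ρ_D(X,Z) - ρ_D(Z,X) = (n/2)(Φ(X,Z) - Φ(Z,X)). -/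
open scoped RealInnerProductSpace

/-- The antisymmetric part of the Ricci tensor of `R^D`:
`ρ_D(X,Z) - ρ_D(Z,X) = (n/2)(Φ(X,Z) - Φ(Z,X))`. -/
theorem stmt_13 {V : Type*} [NormedAddCommGroup V] [InnerProductSpace ℝ V]
    [FiniteDimensional ℝ V] {n : ℕ}
    (hn : Module.finrank ℝ V = n)
    (e : OrthonormalBasis (Fin n) ℝ V)
    (R : V →ₗ[ℝ] V →ₗ[ℝ] V →ₗ[ℝ] V)
    (hskew1 : ∀ X Y Z T : V, ⟪R X Y Z, T⟫ = -⟪R Y X Z, T⟫)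
    (hskew2 : ∀ X Y Z T : V, ⟪R X Y Z, T⟫ = -⟪R X Y T, Z⟫)
    (hpair : ∀ X Y Z T : V, ⟪R X Y Z, T⟫ = ⟪R Z T X, Y⟫)
    (hbianchi : ∀ X Y Z : V, R X Y Z + R Y Z X + R Z X Y = 0)
    (Φ : V →ₗ[ℝ] V →ₗ[ℝ] ℝ) (Φhat : V →ₗ[ℝ] V)
    (hΦhat : ∀ X Y : V, ⟪Φhat X, Y⟫ = Φ X Y) :
    ∀ X Z : V,
      (∑ i, ⟪R X (e i) Z + (1/2 : ℝ) • (Φ X (e i) • Z - Φ (e i) X • Z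
          + Φ X Z • e i - Φ (e i) Z • X
          + ⟪X, Z⟫ • Φhat (e i) - ⟪e i, Z⟫ • Φhat X), e i⟫) -
      (∑ i, ⟪R Z (e i) X + (1/2 : ℝ) • (Φ Z (e i) • X - Φ (e i) Z • X
          + Φ Z X • e i - Φ (e i) X • Z
          + ⟪Z, X⟫ • Φhat (e i) - ⟪e i, X⟫ • Φhat Z), e i⟫) =
      ((n : ℝ) / 2) * (Φ X Z - Φ Z X) := by
  intro X Z
  -- helper sums
  have hone : ∀ i : Fin n, ⟪e i, e i⟫ = (1:ℝ) := fun i => by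
    simp [real_inner_self_eq_norm_mul_norm, e.orthonormal.1 i]
  have hAB : ∀ a b : V, ∑ i, ⟪a, e i⟫ * ⟪b, e i⟫ = ⟪a, b⟫ := by
    intro a b
    have := e.sum_inner_mul_inner a b
    simpa [real_inner_comm] using this
  have hfst : ∀ (a : V), ∑ i, Φ (e i) a * ⟪Z, e i⟫ = Φ Z a := by
    intro a
    have : ∑ i, Φ (⟪e i, Z⟫ • e i) a = Φ Z a := by
      rw [← LinearMap.sum_apply, ← map_sum, e.sum_repr']
    simpa [real_inner_comm Z, mul_comm] using this
  have hfstX : ∀ (a : V), ∑ i, Φ (e i) a * ⟪X, e i⟫ = Φ X a := by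
    intro a
    have : ∑ i, Φ (⟪e i, X⟫ • e i) a = Φ X a := by
      rw [← LinearMap.sum_apply, ← map_sum, e.sum_repr']
    simpa [real_inner_comm X, mul_comm] using this
  have h1 : ∑ i, Φ X (e i) * ⟪Z, e i⟫ = Φ X Z := by
    simpa [hΦhat] using hAB (Φhat X) Z
  have h1' : ∑ i, Φ Z (e i) * ⟪X, e i⟫ = Φ Z X := by
    simpa [hΦhat] using hAB (Φhat Z) X
  have h5 : ∑ i, ⟪e i, Z⟫ * ⟪Φhat X, e i⟫ = Φ X Z := by
    have := hAB (Φhat X) Z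
    rw [hΦhat] at this
    rw [← this]
    exact Finset.sum_congr rfl fun i _ => by rw [real_inner_comm (e i) Z, mul_comm]
  have h5' : ∑ i, ⟪e i, X⟫ * ⟪Φhat Z, e i⟫ = Φ Z X := by
    have := hAB (Φhat Z) X
    rw [hΦhat] at this
    rw [← this]
    exact Finset.sum_congr rfl fun i _ => by rw [real_inner_comm (e i) X, mul_comm]
  have hRR : ∀ i, ⟪R X (e i) Z, e i⟫ = ⟪R Z (e i) X, e i⟫ := fun i => hpair X (e i) Z (e i)
  simp only [inner_add_left, inner_sub_left, real_inner_smul_left, hone, mul_one,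
    Finset.sum_add_distrib, Finset.sum_sub_distrib, ← Finset.mul_sum,
    Finset.sum_congr rfl (fun i _ => hRR i)]
  rw [h1, h1', hfst X, hfstX Z, h5, h5']
  simp only [Finset.sum_const, Finset.card_univ, Fintype.card_fin, nsmul_eq_mul,
    real_inner_comm Z X]
  ring
end

section
/- Let V be a Euclidean vector space with orthogonal complex structure J, and let φ be a linear functional on V with dual vector φ^♯ (⟨φ^♯,Z⟩ = φ(Z)). Let A be any endomorphism of V with J∘A skew-symmetric, fix Y ∈ V, and define the endomorphism D of V by J(D(E)) = J(A(E)) - ½[φ(JE)JY + φ(E)Y - ⟨Y,JE⟩Jφ^♯ - ⟨Y,E⟩φ^♯] for E ∈ V. Then the 2-vector identity (J∘D)^∧ = (J∘A)^∧ - ½(φ^♯∧Y - Jφ^♯∧JY) holds, where a^∧ is determined by 2⟨a^∧, X∧Z⟩ = ⟨aX, Z⟩. -/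
open scoped RealInnerProductSpace

/-- Pointwise form of `(J D_Y J)^∧ = (J ∇_Y J)^∧ - ½(φ^♯∧Y - Jφ^♯∧JY)`, relating the
Weyl and Levi-Civita covariant derivatives of `J`. `Λ²V` is modelled by `W` with wedge
map `w` and inner product `Bf`. -/
theorem stmt_19 {V W : Type*} [NormedAddCommGroup V] [InnerProductSpace ℝ V]
    [FiniteDimensional ℝ V] [AddCommGroup W] [Module ℝ W]
    (J : V →ₗ[ℝ] V)
    (hJ2 : J ∘ₗ J = -LinearMap.id)
    (hJorth : ∀ x y : V, ⟪J x, J y⟫ = ⟪x, y⟫)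
    (w : V →ₗ[ℝ] V →ₗ[ℝ] W)
    (halt : ∀ v : V, w v v = 0)
    (hspan : Submodule.span ℝ {x : W | ∃ u v : V, w u v = x} = ⊤)
    (Bf : W →ₗ[ℝ] W →ₗ[ℝ] ℝ)
    (hBnondeg : ∀ x : W, (∀ y : W, Bf x y = 0) → x = 0)
    (hBf : ∀ v₁ v₂ v₃ v₄ : V,
      Bf (w v₁ v₂) (w v₃ v₄) =
        (1/2 : ℝ) * (⟪v₁, v₃⟫ * ⟪v₂, v₄⟫ - ⟪v₁, v₄⟫ * ⟪v₂, v₃⟫))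
    (φ : V →ₗ[ℝ] ℝ) (φs : V)
    (hφs : ∀ Z : V, ⟪φs, Z⟫ = φ Z)
    (Y : V) (A : V → V)
    (hJAskew : ∀ x y : V, ⟪J (A x), y⟫ = -⟪x, J (A y)⟫)
    (JD : V → V)
    (hJD : ∀ E : V, JD E = J (A E) - (1/2 : ℝ) •
      (φ (J E) • J Y + φ E • Y - ⟪Y, J E⟫ • J φs - ⟪Y, E⟫ • φs))
    (p q : W)
    (hp : ∀ X Z : V, 2 * Bf p (w X Z) = ⟪J (A X), Z⟫)
    (hq : ∀ X Z : V, 2 * Bf q (w X Z) = ⟪JD X, Z⟫) :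
    q = p - (1/2 : ℝ) • (w φs Y - w (J φs) (J Y)) := by
  have hJJ : ∀ v : V, J (J v) = -v := by
    intro v
    have := congrArg (fun f : V →ₗ[ℝ] V => f v) hJ2
    simpa using this
  have hJswap : ∀ a b : V, ⟪J a, b⟫ = -⟪a, J b⟫ := by
    intro a b
    have h := hJorth a (J b)
    rw [hJJ, inner_neg_right] at h
    linarith
  set c : W := (1/2 : ℝ) • (w φs Y - w (J φs) (J Y)) with hc
  have key : ∀ X Z : V, Bf (q - (p - c)) (w X Z) = 0 := by
    intro X Z
    have h1 := hq X Z
    rw [hJD] at h1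
    simp only [inner_sub_left, inner_smul_left, inner_add_left,
      real_inner_smul_left, RCLike.star_def, starRingEnd_apply, star_trivial] at h1
    have h2 := hp X Z
    have h3 := hBf φs Y X Z
    have h4 := hBf (J φs) (J Y) X Z
    simp only [hφs] at h3
    simp only [map_sub, map_smul, LinearMap.sub_apply, LinearMap.smul_apply,
      smul_eq_mul, hc]
    have hJφX : ⟪J φs, X⟫ = -(φ (J X)) := by rw [hJswap, hφs]
    have hJφZ : ⟪J φs, Z⟫ = -(φ (J Z)) := by rw [hJswap, hφs]
    have hJYX : ⟪J Y, X⟫ = -⟪Y, J X⟫ := hJswap Y X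
    have hJYZ : ⟪J Y, Z⟫ = -⟪Y, J Z⟫ := hJswap Y Z
    rw [hJφX, hJφZ, hJYX, hJYZ] at h4
    simp only [hφs] at h1
    -- relate ⟪Y, J Z⟫ appearing in h1 vs h4, and ⟪J Y, Z⟫ in h1
    rw [hJYZ] at h1
    -- h1 may contain ⟪J φs, Z⟫
    rw [hJφZ] at h1
    linarith
  have hker : ∀ y : W, Bf (q - (p - c)) y = 0 := by
    intro y
    have hy : y ∈ Submodule.span ℝ {x : W | ∃ u v : V, w u v = x} := by
      rw [hspan]; trivial
    have hsub : Submodule.span ℝ {x : W | ∃ u v : V, w u v = x} ≤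
        LinearMap.ker (Bf (q - (p - c))) := by
      rw [Submodule.span_le]
      rintro x ⟨u, v, rfl⟩
      exact key u v
    exact hsub hy
  have := hBnondeg _ hker
  exact sub_eq_zero.mp this
end
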